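/- In the rank-one case, let 𝒜 ⊆ ℂ^N \ {0} and ℬ₁ ⊆ {Hermitian positive definite N×N matrices} be convex and closed, and let (a*, R*) minimize a^H R^{-1} a over 𝒜 × ℬ₁. Define w* = R*^{-1} a* / ‖R*^{-1/2} a*‖. Then |w*^H a*|² / (w*^H R* w*) = sup_{w≠0} inf_{(a,R)∈𝒜×ℬ₁} |w^H a|²/(w^H R w) = inf_{(a,R)∈𝒜×ℬ₁} sup_{w≠0} |w^H a|²/(w^H R w), and (w*, a*, R*) solves both the maximin and minimax problems. -/

import Mathlib

open Matrix Complex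
open scoped ComplexOrder

/-- The largest real eigenvalue of a complex matrix (as `sSup` of its set of real
eigenvalues); for a Hermitian matrix this is the largest eigenvalue. -/
noncomputable def lambdaMax {N : ℕ} (A : Matrix (Fin N) (Fin N) ℂ) : ℝ :=
  sSup {t : ℝ | ∃ v : Fin N → ℂ, v ≠ 0 ∧ A.mulVec v = (t : ℂ) • v}

open Classical in
/-- The inverse of the positive definite square root of a positive definite matrix
(junk value `0` if the matrix is not positive definite). -/
noncomputable def isqrt {N : ℕ} (R : Matrix (Fin N) (Fin N) ℂ) : Matrix (Fin N) (Fin N) ℂ :=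
  if h : R.PosDef then
    ((h.posSemidef.1.eigenvectorUnitary : Matrix (Fin N) (Fin N) ℂ) *
      diagonal ((↑) ∘ (√·) ∘ h.posSemidef.1.eigenvalues) *
      (star h.posSemidef.1.eigenvectorUnitary : Matrix (Fin N) (Fin N) ℂ))⁻¹ else 0

/-- Euclidean norm of a complex vector. -/
noncomputable def vecNorm {N : ℕ} (v : Fin N → ℂ) : ℝ :=
  Real.sqrt (∑ i, Complex.normSq (v i))

/-- Frobenius norm of a complex matrix. -/
noncomputable def frobNorm {N M : ℕ} (X : Matrix (Fin N) (Fin M) ℂ) : ℝ :=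
  Real.sqrt (∑ i, ∑ j, Complex.normSq (X i j))

/-!
Write `g(a, R) = aᴴ R⁻¹ a`. For fixed `(a, R)` the SINR of any `w ≠ 0` is at most `g(a, R)`,
with equality at `w = R⁻¹ a`, so `w* ∝ R*⁻¹ a*` maximises `S(·, a*, R*)` with value `g(a*, R*)`.
The other saddle inequality `g(a*, R*) ≤ S(w*, a, R)` follows from the first-order optimality
conditions of `(a*, R*)` along segments in the convex sets `𝒜` and `ℬ₁`, which say
`Re(w*ᴴ a) ≥ Re(w*ᴴ a*)` and `w*ᴴ R w* ≤ w*ᴴ R* w*`. For the second one, the identity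
`g(a, R) = max_w (2 Re(wᴴ a) - wᴴ R w)` bounds the difference quotient of `g(a*, ·)` by a
function of the step that is continuous at `0`. Finally, at a saddle point of `S` both the
maximin and the minimax value equal the value of `S` there.
-/

open Set Filter

theorem ContinuousAt.nonneg_of_forall_Ioo {h : ℝ → ℝ} (hh : ContinuousAt h 0)
    (hpos : ∀ t ∈ Ioo (0 : ℝ) 1, 0 ≤ h t) : 0 ≤ h 0 :=
  ge_of_tendsto (hh.tendsto.mono_left nhdsWithin_le_nhds)
    (eventually_of_mem (Ioo_mem_nhdsGT one_pos) hpos)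

section Saddle

variable {ι κ α : Type*} [ConditionallyCompleteLattice α] {f : ι → κ → α} {i₀ : ι} {j₀ : κ}

theorem ciSup_ciInf_eq_of_saddle (hi : ∀ i, f i j₀ ≤ f i₀ j₀) (hj : ∀ j, f i₀ j₀ ≤ f i₀ j)
    (hbdd : ∀ i, BddBelow (range (f i))) : ⨆ i, ⨅ j, f i j = f i₀ j₀ := by
  have : Nonempty ι := ⟨i₀⟩
  have : Nonempty κ := ⟨j₀⟩
  have hle : ∀ i, ⨅ j, f i j ≤ f i₀ j₀ := fun i ↦ ciInf_le_of_le (hbdd i) j₀ (hi i)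
  exact le_antisymm (ciSup_le hle) (le_ciSup_of_le ⟨_, forall_mem_range.2 hle⟩ i₀ (le_ciInf hj))

theorem ciInf_ciSup_eq_of_saddle (hi : ∀ i, f i j₀ ≤ f i₀ j₀) (hj : ∀ j, f i₀ j₀ ≤ f i₀ j)
    (hbdd : ∀ j, BddAbove (range (f · j))) : ⨅ j, ⨆ i, f i j = f i₀ j₀ := by
  have : Nonempty ι := ⟨i₀⟩
  have : Nonempty κ := ⟨j₀⟩
  have hge : ∀ j, f i₀ j₀ ≤ ⨆ i, f i j := fun j ↦ le_ciSup_of_le (hbdd j) i₀ (hj j)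
  exact le_antisymm (ciInf_le_of_le ⟨_, forall_mem_range.2 hge⟩ j₀ (ciSup_le hi)) (le_ciInf hge)

end Saddle

section SINR

variable {n : Type*} [Fintype n]

theorem Matrix.IsHermitian.star_mulVec_dotProduct {M : Matrix n n ℂ} (hM : M.IsHermitian)
    (x y : n → ℂ) : star (M *ᵥ x) ⬝ᵥ y = star x ⬝ᵥ M *ᵥ y := by
  rw [star_mulVec, hM.eq, ← dotProduct_mulVec]

theorem Matrix.IsHermitian.re_star_dotProduct_mulVec_comm {M : Matrix n n ℂ}
    (hM : M.IsHermitian) (x y : n → ℂ) :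
    (star x ⬝ᵥ M *ᵥ y).re = (star y ⬝ᵥ M *ᵥ x).re := by
  rw [← hM.star_mulVec_dotProduct, star_dotProduct]
  exact Complex.conj_re _

theorem Matrix.IsHermitian.re_star_add_smul_dotProduct_mulVec {M : Matrix n n ℂ}
    (hM : M.IsHermitian) (x d : n → ℂ) (t : ℝ) :
    (star (x + t • d) ⬝ᵥ M *ᵥ (x + t • d)).re =
      (star x ⬝ᵥ M *ᵥ x).re + 2 * t * (star x ⬝ᵥ M *ᵥ d).re
        + t ^ 2 * (star d ⬝ᵥ M *ᵥ d).re := by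
  have hsymm := hM.re_star_dotProduct_mulVec_comm d x
  simp only [star_add, star_smul, star_trivial, mulVec_add, mulVec_smul, add_dotProduct,
    dotProduct_add, smul_dotProduct, dotProduct_smul, Complex.add_re, Complex.smul_re,
    smul_eq_mul, hsymm]
  ring

theorem IsMinOn.re_star_dotProduct_mulVec_sub_nonneg {M : Matrix n n ℂ} (hM : M.IsHermitian)
    {S : Set (n → ℂ)} (hS : Convex ℝ S) {x₀ y : n → ℂ}
    (hmin : IsMinOn (fun x ↦ (star x ⬝ᵥ M *ᵥ x).re) S x₀) (hx₀ : x₀ ∈ S) (hy : y ∈ S) :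
    0 ≤ (star x₀ ⬝ᵥ M *ᵥ (y - x₀)).re := by
  set c := (star x₀ ⬝ᵥ M *ᵥ (y - x₀)).re
  set k := (star (y - x₀) ⬝ᵥ M *ᵥ (y - x₀)).re
  have hpos : ∀ t ∈ Ioo (0 : ℝ) 1, 0 ≤ 2 * c + t * k := by
    intro t ht
    have hle := isMinOn_iff.mp hmin _ (hS.add_smul_sub_mem hx₀ hy (Ioo_subset_Icc_self ht))
    rw [hM.re_star_add_smul_dotProduct_mulVec] at hle
    nlinarith [ht.1]
  have := ContinuousAt.nonneg_of_forall_Ioo (h := fun t ↦ 2 * c + t * k) (by fun_prop) hpos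
  simp only [zero_mul, add_zero] at this
  linarith

/-- The SINR `S(w, a, R)`. -/
noncomputable def sinr (w a : n → ℂ) (R : Matrix n n ℂ) : ℝ :=
  normSq (star w ⬝ᵥ a) / (star w ⬝ᵥ R *ᵥ w).re

variable {w a : n → ℂ} {R : Matrix n n ℂ}

theorem sinr_smul {c : ℂ} (hc : c ≠ 0) : sinr (c • w) a R = sinr w a R := by
  have hden : (star (c • w) ⬝ᵥ R *ᵥ (c • w)).re = normSq c * (star w ⬝ᵥ R *ᵥ w).re := by
    rw [star_smul, mulVec_smul, smul_dotProduct, dotProduct_smul, smul_eq_mul, smul_eq_mul,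
      ← mul_assoc, Complex.star_def, ← Complex.normSq_eq_conj_mul_self, Complex.re_ofReal_mul]
  rw [sinr, sinr, hden, star_smul, smul_dotProduct, smul_eq_mul, Complex.star_def, map_mul,
    Complex.normSq_conj, mul_div_mul_left _ _ (normSq_pos.mpr hc).ne']

theorem sinr_nonneg (hR : R.PosSemidef) : 0 ≤ sinr w a R :=
  div_nonneg (normSq_nonneg _) (hR.re_dotProduct_nonneg w)

theorem le_sinr {v : ℝ} (hv : 0 < v) (hva : v ≤ (star w ⬝ᵥ a).re)
    (hpos : 0 < (star w ⬝ᵥ R *ᵥ w).re) (hle : (star w ⬝ᵥ R *ᵥ w).re ≤ v) : v ≤ sinr w a R := by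
  rw [sinr, le_div_iff₀ hpos]
  nlinarith [re_sq_le_normSq (star w ⬝ᵥ a)]

variable [DecidableEq n]

theorem Matrix.PosDef.mulVec_inv_mulVec (hR : R.PosDef) (a : n → ℂ) : R *ᵥ (R⁻¹ *ᵥ a) = a := by
  rw [mulVec_mulVec, mul_nonsing_inv _ ((isUnit_iff_isUnit_det _).mp hR.isUnit), one_mulVec]

theorem Matrix.PosDef.inv_mulVec_ne_zero (hR : R.PosDef) (ha : a ≠ 0) : R⁻¹ *ᵥ a ≠ 0 :=
  fun h ↦ ha (by rw [← hR.mulVec_inv_mulVec a, h, mulVec_zero])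

theorem Matrix.PosDef.star_inv_mulVec_dotProduct (hR : R.PosDef) (a : n → ℂ) :
    star (R⁻¹ *ᵥ a) ⬝ᵥ a = star a ⬝ᵥ R⁻¹ *ᵥ a :=
  hR.inv.isHermitian.star_mulVec_dotProduct a a

/-- Expanding `0 ≤ (w - R⁻¹ a)ᴴ R (w - R⁻¹ a)`; equality holds at `w = R⁻¹ a`. -/
theorem Matrix.PosDef.two_mul_re_sub_re_le (hR : R.PosDef) (a w : n → ℂ) :
    2 * (star w ⬝ᵥ a).re - (star w ⬝ᵥ R *ᵥ w).re ≤ (star a ⬝ᵥ R⁻¹ *ᵥ a).re := by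
  set x := R⁻¹ *ᵥ a
  have hx : R *ᵥ x = a := hR.mulVec_inv_mulVec a
  have hxa : star x ⬝ᵥ a = star a ⬝ᵥ x := hR.star_inv_mulVec_dotProduct a
  have hsymm := hR.isHermitian.re_star_dotProduct_mulVec_comm x w
  have hnonneg := hR.posSemidef.re_dotProduct_nonneg (w - x)
  simp only [star_sub, mulVec_sub, sub_dotProduct, dotProduct_sub, RCLike.re_to_complex,
    Complex.sub_re, hsymm, hx, hxa] at hnonneg
  linarith

theorem sinr_le (hR : R.PosDef) (hw : w ≠ 0) : sinr w a R ≤ (star a ⬝ᵥ R⁻¹ *ᵥ a).re := by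
  set α := star w ⬝ᵥ a
  set q := (star w ⬝ᵥ R *ᵥ w).re
  have hq : 0 < q := hR.re_dotProduct_pos hw
  -- the multiple of `w` maximising the left side of `two_mul_re_sub_re_le`
  set c : ℂ := (q : ℂ)⁻¹ * α
  have hnum : star (c • w) ⬝ᵥ a = ((normSq α / q : ℝ) : ℂ) := by
    rw [star_smul, smul_dotProduct, smul_eq_mul, Complex.star_def, map_mul, map_inv₀,
      Complex.conj_ofReal, mul_assoc, ← Complex.normSq_eq_conj_mul_self]
    push_cast
    ring
  have hden : (star (c • w) ⬝ᵥ R *ᵥ (c • w)).re = normSq α / q := by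
    rw [star_smul, mulVec_smul, smul_dotProduct, dotProduct_smul, smul_eq_mul, smul_eq_mul,
      ← mul_assoc, Complex.star_def, ← Complex.normSq_eq_conj_mul_self, Complex.re_ofReal_mul,
      map_mul, Complex.normSq_inv, Complex.normSq_ofReal]
    field_simp
    exact mul_comm _ _
  have := hR.two_mul_re_sub_re_le a (c • w)
  rw [hnum, hden, Complex.ofReal_re] at this
  rw [sinr]
  linarith

theorem sinr_inv_mulVec (hR : R.PosDef) : sinr (R⁻¹ *ᵥ a) a R = (star a ⬝ᵥ R⁻¹ *ᵥ a).re := by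
  have hreal : star a ⬝ᵥ R⁻¹ *ᵥ a = ((star a ⬝ᵥ R⁻¹ *ᵥ a).re : ℂ) :=
    Complex.ext (by simp) (by simpa using hR.inv.isHermitian.im_star_dotProduct_mulVec_self a)
  rw [sinr, hR.mulVec_inv_mulVec, hR.star_inv_mulVec_dotProduct, hreal, normSq_ofReal,
    ofReal_re, mul_self_div_self]

theorem Matrix.PosDef.re_star_inv_mulVec_dotProduct_mulVec_le {R₀ R₁ : Matrix n n ℂ}
    (hR₀ : R₀.PosDef) (hR₁ : R₁.PosDef)
    (hle : (star a ⬝ᵥ R₀⁻¹ *ᵥ a).re ≤ (star a ⬝ᵥ R₁⁻¹ *ᵥ a).re) :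
    (star (R₁⁻¹ *ᵥ a) ⬝ᵥ R₁ *ᵥ (R₁⁻¹ *ᵥ a)).re ≤ (star (R₁⁻¹ *ᵥ a) ⬝ᵥ R₀ *ᵥ (R₁⁻¹ *ᵥ a)).re := by
  have hvar := hR₀.two_mul_re_sub_re_le a (R₁⁻¹ *ᵥ a)
  rw [hR₁.star_inv_mulVec_dotProduct] at hvar
  rw [hR₁.mulVec_inv_mulVec, hR₁.star_inv_mulVec_dotProduct]
  linarith

theorem IsMinOn.re_star_inv_mulVec_dotProduct_mulVec_le {S : Set (Matrix n n ℂ)}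
    (hS : Convex ℝ S) (hpd : ∀ R ∈ S, R.PosDef) {R₀ : Matrix n n ℂ}
    (hmin : IsMinOn (fun R ↦ (star a ⬝ᵥ R⁻¹ *ᵥ a).re) S R₀) (hR₀ : R₀ ∈ S) (hR : R ∈ S) :
    (star (R₀⁻¹ *ᵥ a) ⬝ᵥ R *ᵥ (R₀⁻¹ *ᵥ a)).re ≤ (star a ⬝ᵥ R₀⁻¹ *ᵥ a).re := by
  -- `0 ≤ h t` compares `R₀` with `R₀ + t • (R - R₀)` at the maximiser `x t` of the latter;
  -- the claim is the limit `t → 0`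
  set x : ℝ → n → ℂ := fun t ↦ (R₀ + t • (R - R₀))⁻¹ *ᵥ a
  set h : ℝ → ℝ := fun t ↦ (star (x t) ⬝ᵥ R₀ *ᵥ x t).re - (star (x t) ⬝ᵥ R *ᵥ x t).re
  have hpos : ∀ t ∈ Ioo (0 : ℝ) 1, 0 ≤ h t := by
    intro t ht
    have hmem := hS.add_smul_sub_mem hR₀ hR (Ioo_subset_Icc_self ht)
    have hle := (hpd R₀ hR₀).re_star_inv_mulVec_dotProduct_mulVec_le (hpd _ hmem)
      (isMinOn_iff.mp hmin _ hmem)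
    simp only [add_mulVec, smul_mulVec, sub_mulVec, dotProduct_add, dotProduct_smul,
      dotProduct_sub, Complex.add_re, Complex.smul_re, Complex.sub_re, smul_eq_mul] at hle
    simp only [h, x]
    nlinarith [ht.1]
  have hinv : ContinuousAt (fun t : ℝ ↦ (R₀ + t • (R - R₀))⁻¹) 0 := by
    have hdet : R₀.det ≠ 0 := (hpd R₀ hR₀).det_pos.ne'
    have := continuousAt_matrix_inv R₀ (by rw [Ring.inverse_eq_inv']; exact continuousAt_inv₀ hdet)
    refine ContinuousAt.comp (f := fun t : ℝ ↦ R₀ + t • (R - R₀)) (g := Inv.inv) ?_ (by fun_prop)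
    simpa using this
  have := ContinuousAt.nonneg_of_forall_Ioo (by fun_prop : ContinuousAt h 0) hpos
  simp only [h, x, zero_smul, add_zero, (hpd R₀ hR₀).mulVec_inv_mulVec,
    (hpd R₀ hR₀).star_inv_mulVec_dotProduct] at this
  linarith

theorem le_sinr_inv_mulVec_of_forall_le {𝒜 : Set (n → ℂ)} {B : Set (Matrix n n ℂ)}
    (h𝒜 : Convex ℝ 𝒜) (hB : Convex ℝ B) (hpd : ∀ R ∈ B, R.PosDef) {a₀ : n → ℂ}
    {R₀ : Matrix n n ℂ} (ha₀ : a₀ ∈ 𝒜) (hR₀ : R₀ ∈ B) (ha₀0 : a₀ ≠ 0)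
    (hmin : ∀ a ∈ 𝒜, ∀ R ∈ B, (star a₀ ⬝ᵥ R₀⁻¹ *ᵥ a₀).re ≤ (star a ⬝ᵥ R⁻¹ *ᵥ a).re)
    (ha : a ∈ 𝒜) (hR : R ∈ B) :
    (star a₀ ⬝ᵥ R₀⁻¹ *ᵥ a₀).re ≤ sinr (R₀⁻¹ *ᵥ a₀) a R := by
  have hR₀pd := hpd R₀ hR₀
  have hfirst_a := IsMinOn.re_star_dotProduct_mulVec_sub_nonneg hR₀pd.inv.isHermitian h𝒜
    (isMinOn_iff.mpr fun a ha ↦ hmin a ha R₀ hR₀) ha₀ ha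
  have hfirst_R := IsMinOn.re_star_inv_mulVec_dotProduct_mulVec_le hB hpd
    (isMinOn_iff.mpr fun R hR ↦ hmin a₀ ha₀ R hR) hR₀ hR
  rw [mulVec_sub, dotProduct_sub, Complex.sub_re] at hfirst_a
  refine le_sinr (hR₀pd.inv.re_dotProduct_pos ha₀0) ?_
    ((hpd R hR).re_dotProduct_pos (hR₀pd.inv_mulVec_ne_zero ha₀0)) hfirst_R
  rw [hR₀pd.inv.isHermitian.star_mulVec_dotProduct]
  linarith

end SINR

theorem rank_one_maximin_minimax_general {N : ℕ}
    (𝒜 : Set (Fin N → ℂ)) (B₁ : Set (Matrix (Fin N) (Fin N) ℂ))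
    (h𝒜conv : Convex ℝ 𝒜)
    (h𝒜0 : (0 : Fin N → ℂ) ∉ 𝒜)
    (hB₁conv : Convex ℝ B₁)
    (hB₁pd : ∀ R ∈ B₁, R.PosDef)
    (as : Fin N → ℂ) (Rs : Matrix (Fin N) (Fin N) ℂ) (has : as ∈ 𝒜) (hRs : Rs ∈ B₁)
    (hmin : ∀ a ∈ 𝒜, ∀ R ∈ B₁,
      (star as ⬝ᵥ Rs⁻¹.mulVec as).re ≤ (star a ⬝ᵥ R⁻¹.mulVec a).re)
    (ws : Fin N → ℂ)
    (hws : ws = ((Real.sqrt ((star as ⬝ᵥ Rs⁻¹.mulVec as).re))⁻¹ : ℝ) • Rs⁻¹.mulVec as) :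
    (Complex.normSq (star ws ⬝ᵥ as) / (star ws ⬝ᵥ Rs.mulVec ws).re
        = ⨆ w : {w : Fin N → ℂ // w ≠ 0}, ⨅ p : ↥(𝒜 ×ˢ B₁),
            Complex.normSq (star w.1 ⬝ᵥ p.1.1) / (star w.1 ⬝ᵥ p.1.2.mulVec w.1).re) ∧
    ((⨆ w : {w : Fin N → ℂ // w ≠ 0}, ⨅ p : ↥(𝒜 ×ˢ B₁),
        Complex.normSq (star w.1 ⬝ᵥ p.1.1) / (star w.1 ⬝ᵥ p.1.2.mulVec w.1).re)
      = ⨅ p : ↥(𝒜 ×ˢ B₁), ⨆ w : {w : Fin N → ℂ // w ≠ 0},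
          Complex.normSq (star w.1 ⬝ᵥ p.1.1) / (star w.1 ⬝ᵥ p.1.2.mulVec w.1).re) ∧
    (∀ w : Fin N → ℂ, w ≠ 0 → ∀ a ∈ 𝒜, ∀ R ∈ B₁,
      Complex.normSq (star w ⬝ᵥ as) / (star w ⬝ᵥ Rs.mulVec w).re
          ≤ Complex.normSq (star ws ⬝ᵥ as) / (star ws ⬝ᵥ Rs.mulVec ws).re ∧
      Complex.normSq (star ws ⬝ᵥ as) / (star ws ⬝ᵥ Rs.mulVec ws).re
          ≤ Complex.normSq (star ws ⬝ᵥ a) / (star ws ⬝ᵥ R.mulVec ws).re) := by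
  have hRs_pd := hB₁pd Rs hRs
  have has0 : as ≠ 0 := fun h ↦ h𝒜0 (h ▸ has)
  have hv : 0 < (star as ⬝ᵥ Rs⁻¹ *ᵥ as).re := hRs_pd.inv.re_dotProduct_pos has0
  have hc : (((√(star as ⬝ᵥ Rs⁻¹ *ᵥ as).re)⁻¹ : ℝ) : ℂ) ≠ 0 := by
    exact_mod_cast (inv_pos.mpr (Real.sqrt_pos.mpr hv)).ne'
  rw [RCLike.real_smul_eq_coe_smul (K := ℂ)] at hws
  have hws0 : ws ≠ 0 := hws ▸ smul_ne_zero hc (hRs_pd.inv_mulVec_ne_zero has0)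
  have hsinr_ws : ∀ a R, sinr ws a R = sinr (Rs⁻¹ *ᵥ as) a R := fun a R ↦ hws ▸ sinr_smul hc
  have hval : sinr ws as Rs = (star as ⬝ᵥ Rs⁻¹ *ᵥ as).re :=
    (hsinr_ws as Rs).trans (sinr_inv_mulVec hRs_pd)
  have hsaddle : ∀ w : Fin N → ℂ, w ≠ 0 → ∀ a ∈ 𝒜, ∀ R ∈ B₁,
      sinr w as Rs ≤ sinr ws as Rs ∧ sinr ws as Rs ≤ sinr ws a R := fun w hw a ha R hR ↦
    ⟨hval ▸ sinr_le hRs_pd hw, hval ▸ hsinr_ws a R ▸ le_sinr_inv_mulVec_of_forall_le h𝒜conv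
      hB₁conv hB₁pd has hRs has0 hmin ha hR⟩
  let f (w : {w : Fin N → ℂ // w ≠ 0}) (p : ↥(𝒜 ×ˢ B₁)) : ℝ := sinr w.1 p.1.1 p.1.2
  have hi (w) : f w ⟨(as, Rs), has, hRs⟩ ≤ f ⟨ws, hws0⟩ ⟨(as, Rs), has, hRs⟩ :=
    (hsaddle w.1 w.2 as has Rs hRs).1
  have hj (p) : f ⟨ws, hws0⟩ ⟨(as, Rs), has, hRs⟩ ≤ f ⟨ws, hws0⟩ p :=
    (hsaddle ws hws0 _ p.2.1 _ p.2.2).2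
  have hmaximin := ciSup_ciInf_eq_of_saddle hi hj fun w ↦
    ⟨0, forall_mem_range.2 fun p ↦ sinr_nonneg (hB₁pd _ p.2.2).posSemidef⟩
  have hminimax := ciInf_ciSup_eq_of_saddle hi hj fun p ↦
    ⟨_, forall_mem_range.2 fun w ↦ sinr_le (hB₁pd _ p.2.2) w.2⟩
  exact ⟨hmaximin.symm, hmaximin.trans hminimax.symm, hsaddle⟩

/-- the rank-one case. For convex closed `𝒜 ⊆ ℂ^N \ {0}` and
`ℬ₁ ⊆` (Hermitian positive definite matrices), if `(a*, R*)` minimizes `aᴴ R⁻¹ a` over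
`𝒜 × ℬ₁` and `w* = R*⁻¹ a* / ‖R*^{-1/2} a*‖`, then
`|w*ᴴ a*|²/(w*ᴴ R* w*)` equals both the maximin and the minimax SINR values, and
`(w*, a*, R*)` is a saddle point (solves both problems). -/
theorem rank_one_maximin_minimax {N : ℕ} (hN : 0 < N)
    (𝒜 : Set (Fin N → ℂ)) (B₁ : Set (Matrix (Fin N) (Fin N) ℂ))
    (h𝒜ne : 𝒜.Nonempty) (h𝒜conv : Convex ℝ 𝒜) (h𝒜cl : IsClosed 𝒜)
    (h𝒜0 : (0 : Fin N → ℂ) ∉ 𝒜)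
    (hB₁ne : B₁.Nonempty) (hB₁conv : Convex ℝ B₁) (hB₁cl : IsClosed B₁)
    (hB₁pd : ∀ R ∈ B₁, R.PosDef)
    (as : Fin N → ℂ) (Rs : Matrix (Fin N) (Fin N) ℂ) (has : as ∈ 𝒜) (hRs : Rs ∈ B₁)
    (hmin : ∀ a ∈ 𝒜, ∀ R ∈ B₁,
      (star as ⬝ᵥ Rs⁻¹.mulVec as).re ≤ (star a ⬝ᵥ R⁻¹.mulVec a).re)
    (ws : Fin N → ℂ)
    (hws : ws = ((Real.sqrt ((star as ⬝ᵥ Rs⁻¹.mulVec as).re))⁻¹ : ℝ) • Rs⁻¹.mulVec as) :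
    (Complex.normSq (star ws ⬝ᵥ as) / (star ws ⬝ᵥ Rs.mulVec ws).re
        = ⨆ w : {w : Fin N → ℂ // w ≠ 0}, ⨅ p : ↥(𝒜 ×ˢ B₁),
            Complex.normSq (star w.1 ⬝ᵥ p.1.1) / (star w.1 ⬝ᵥ p.1.2.mulVec w.1).re) ∧
    ((⨆ w : {w : Fin N → ℂ // w ≠ 0}, ⨅ p : ↥(𝒜 ×ˢ B₁),
        Complex.normSq (star w.1 ⬝ᵥ p.1.1) / (star w.1 ⬝ᵥ p.1.2.mulVec w.1).re)
      = ⨅ p : ↥(𝒜 ×ˢ B₁), ⨆ w : {w : Fin N → ℂ // w ≠ 0},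
          Complex.normSq (star w.1 ⬝ᵥ p.1.1) / (star w.1 ⬝ᵥ p.1.2.mulVec w.1).re) ∧
    (∀ w : Fin N → ℂ, w ≠ 0 → ∀ a ∈ 𝒜, ∀ R ∈ B₁,
      Complex.normSq (star w ⬝ᵥ as) / (star w ⬝ᵥ Rs.mulVec w).re
          ≤ Complex.normSq (star ws ⬝ᵥ as) / (star ws ⬝ᵥ Rs.mulVec ws).re ∧
      Complex.normSq (star ws ⬝ᵥ as) / (star ws ⬝ᵥ Rs.mulVec ws).re
          ≤ Complex.normSq (star ws ⬝ᵥ a) / (star ws ⬝ᵥ R.mulVec ws).re) :=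
  rank_one_maximin_minimax_general 𝒜 B₁ h𝒜conv h𝒜0 hB₁conv hB₁pd as Rs has hRs hmin ws hws
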